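/- For every α ∈ [0, π/2], the infimum over φ ∈ (0, π) of (1 − cos α · cos φ) / sin²φ equals (1 + sin α)/2, and in particular is at least 1/2. -/
import Mathlib

open Real Set

theorem stmt_0 (α : ℝ) (hα : α ∈ Set.Icc 0 (π / 2)) :
    sInf ((fun φ => (1 - Real.cos α * Real.cos φ) / (Real.sin φ) ^ 2) '' Set.Ioo 0 π)
      = (1 + Real.sin α) / 2 ∧ (1 + Real.sin α) / 2 ≥ 1 / 2 := by
  obtain ⟨hα0, hα1⟩ := hα
  have hs0 : 0 ≤ Real.sin α := Real.sin_nonneg_of_nonneg_of_le_pi hα0 (by linarith [Real.pi_pos])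
  have hc0 : 0 ≤ Real.cos α := Real.cos_nonneg_of_mem_Icc ⟨by linarith [Real.pi_pos], hα1⟩
  have hpyth : Real.sin α ^ 2 + Real.cos α ^ 2 = 1 := Real.sin_sq_add_cos_sq α
  have hc1 : Real.cos α ≤ 1 := Real.cos_le_one α
  refine ⟨?_, by linarith⟩
  -- helper: value at arccos t
  have hval : ∀ t : ℝ, -1 < t → t < 1 →
      (1 - Real.cos α * Real.cos (Real.arccos t)) / (Real.sin (Real.arccos t)) ^ 2
        = (1 - Real.cos α * t) / (1 - t ^ 2) ∧ Real.arccos t ∈ Set.Ioo 0 π := by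
    intro t ht1 ht2
    have h1 : Real.cos (Real.arccos t) = t := Real.cos_arccos (by linarith) (by linarith)
    have h2 : Real.sin (Real.arccos t) ^ 2 = 1 - t ^ 2 := by
      rw [Real.sin_arccos, Real.sq_sqrt (by nlinarith)]
    refine ⟨by rw [h1, h2], Real.arccos_pos.2 ht2, ?_⟩
    rw [Real.arccos_eq_pi_div_two_sub_arcsin]
    have := Real.neg_pi_div_two_lt_arcsin.2 ht1
    linarith
  apply csInf_eq_of_forall_ge_of_forall_gt_exists_lt
  · exact ⟨_, Set.mem_image_of_mem _ ⟨Real.pi_div_two_pos, by linarith [Real.pi_pos]⟩⟩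
  · rintro x ⟨φ, ⟨h1, h2⟩, rfl⟩
    have hsφ : 0 < Real.sin φ := Real.sin_pos_of_pos_of_lt_pi h1 h2
    have hpφ : Real.sin φ ^ 2 + Real.cos φ ^ 2 = 1 := Real.sin_sq_add_cos_sq φ
    rw [le_div_iff₀ (by positivity)]
    nlinarith [sq_nonneg ((1 + Real.sin α) * Real.cos φ - Real.cos α)]
  · intro w hw
    by_cases hsz : Real.sin α = 0
    · -- α = 0 case: cos α = 1
      have hc : Real.cos α = 1 := by nlinarith
      have hwpos : (1:ℝ)/2 < w := by rw [hsz] at hw; linarith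
      set t : ℝ := 1 / (2 * w) with hts
      have ht0 : 0 < t := by positivity
      have ht1 : t < 1 := by rw [hts, div_lt_one (by linarith)]; linarith
      obtain ⟨hv, hmem⟩ := hval t (by linarith) ht1
      refine ⟨_, Set.mem_image_of_mem _ hmem, ?_⟩
      show (1 - Real.cos α * Real.cos (Real.arccos t)) / (Real.sin (Real.arccos t)) ^ 2 < w
      rw [hv, hc, one_mul, div_lt_iff₀ (by nlinarith)]
      have h2w : t * (2 * w) = 1 := by rw [hts]; field_simp
      nlinarith
    · have hspos : 0 < Real.sin α := lt_of_le_of_ne hs0 (Ne.symm hsz)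
      set t : ℝ := Real.cos α / (1 + Real.sin α) with hts
      have ht0 : 0 ≤ t := by positivity
      have ht1 : t < 1 := by rw [hts, div_lt_one (by linarith)]; linarith
      obtain ⟨hv, hmem⟩ := hval t (by linarith) ht1
      refine ⟨_, Set.mem_image_of_mem _ hmem, ?_⟩
      show (1 - Real.cos α * Real.cos (Real.arccos t)) / (Real.sin (Real.arccos t)) ^ 2 < w
      rw [hv]
      have hne : (1 : ℝ) + Real.sin α ≠ 0 := by linarith
      have hden : 1 - t ^ 2 > 0 := by nlinarith
      have : (1 - Real.cos α * t) / (1 - t ^ 2) = (1 + Real.sin α) / 2 := by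
        rw [div_eq_div_iff (by linarith) two_ne_zero, hts]
        field_simp
        ring_nf
        nlinarith [sq_nonneg (Real.sin α)]
      rw [this]; exact hw
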